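/- arXiv:2410.20640 — 3 statements merged into one kernel-verified Lean document; each statement's English description precedes it below -/
import Mathlib

section
/- For the logistic function μ and any a, b ∈ ℝ, ∫₀¹ μ'(a + v(b−a)) dv ≥ μ'(a) / (1 + |b−a|), and also ≥ μ'(b) / (1 + |b−a|). -/
/-!
The derivative σ' = σ · σ(-·) of the logistic function decays at most exponentially: σ is
increasing while σ(u) e^{-u} = σ(-u) is decreasing, so σ'(y) ≥ σ'(x) e^{-|y-x|}. Along the segment
this gives ∫₀¹ σ'(a + v(b-a)) dv ≥ σ'(a) ∫₀¹ e^{-v|b-a|} dv, and ∫₀¹ e^{-vs} dv = (1 - e^{-s})/s is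
at least 1/(1+s) because e^s ≥ 1 + s. The bound at b follows by reversing the segment.
-/

open Real intervalIntegral

namespace Real

lemma sigmoid_mul_exp_neg_sub_le {w u : ℝ} (h : w ≤ u) : sigmoid u * exp (-(u - w)) ≤ sigmoid w :=
  calc sigmoid u * exp (-(u - w)) = sigmoid (-u) * exp w := by
        rw [← sigmoid_mul_rexp_neg, mul_assoc, ← exp_add]; ring_nf
    _ ≤ sigmoid (-w) * exp w := by gcongr
    _ = sigmoid w := by rw [← sigmoid_mul_rexp_neg, mul_assoc, ← exp_add]; simp

lemma deriv_sigmoid_eq_mul_sigmoid_neg (z : ℝ) : deriv sigmoid z = sigmoid z * sigmoid (-z) := by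
  rw [deriv_sigmoid, sigmoid_neg]

lemma deriv_sigmoid_nonneg (z : ℝ) : 0 ≤ deriv sigmoid z := by
  rw [deriv_sigmoid_eq_mul_sigmoid_neg]
  exact mul_nonneg (sigmoid_nonneg z) (sigmoid_nonneg _)

lemma deriv_sigmoid_neg (z : ℝ) : deriv sigmoid (-z) = deriv sigmoid z := by
  rw [deriv_sigmoid_eq_mul_sigmoid_neg, deriv_sigmoid_eq_mul_sigmoid_neg, neg_neg, mul_comm]

lemma continuous_deriv_sigmoid : Continuous (deriv sigmoid) := by
  rw [deriv_sigmoid]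
  fun_prop

lemma deriv_sigmoid_mul_exp_neg_abs_le (x y : ℝ) :
    deriv sigmoid x * exp (-|y - x|) ≤ deriv sigmoid y := by
  wlog hxy : x ≤ y generalizing x y
  · simpa only [deriv_sigmoid_neg, neg_sub_neg, abs_sub_comm x y] using
      this (-x) (-y) (by linarith)
  have hσ : sigmoid (-x) * exp (-(y - x)) ≤ sigmoid (-y) := by
    simpa only [neg_sub_neg] using sigmoid_mul_exp_neg_sub_le (neg_le_neg hxy)
  rw [abs_of_nonneg (sub_nonneg.2 hxy), deriv_sigmoid_eq_mul_sigmoid_neg,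
    deriv_sigmoid_eq_mul_sigmoid_neg, mul_assoc]
  exact mul_le_mul (sigmoid_le hxy) hσ (mul_nonneg (sigmoid_nonneg _) (exp_pos _).le)
    (sigmoid_nonneg y)

end Real

lemma inv_one_add_le_integral_exp_neg_mul {s : ℝ} (hs : 0 ≤ s) :
    (1 + s)⁻¹ ≤ ∫ v in (0 : ℝ)..1, exp (-(s * v)) := by
  rcases hs.eq_or_lt with rfl | hs
  · simp
  have hI : s * ∫ v in (0 : ℝ)..1, exp (-(s * v)) = 1 - exp (-s) := by
    have := smul_integral_comp_mul_left (fun v => exp (-v)) s (a := 0) (b := 1)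
    simp only [smul_eq_mul, mul_zero, mul_one] at this
    rw [this, integral_comp_neg]
    simp [integral_exp]
  have hexp : (1 + s) * exp (-s) ≤ 1 := by
    calc (1 + s) * exp (-s) ≤ exp s * exp (-s) := by gcongr; linarith [add_one_le_exp s]
      _ = 1 := by rw [← exp_add]; simp
  rw [inv_le_iff_one_le_mul₀ (by positivity)]
  nlinarith

lemma integral_comp_add_mul_sub_symm {E : Type*} [NormedAddCommGroup E] [NormedSpace ℝ E]
    (f : ℝ → E) (a b : ℝ) :
    ∫ v in (0 : ℝ)..1, f (a + v * (b - a)) = ∫ v in (0 : ℝ)..1, f (b + v * (a - b)) := by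
  have h := integral_comp_sub_left (fun v => f (a + v * (b - a))) 1 (a := 0) (b := 1)
  simp only [sub_zero, sub_self] at h
  rw [← h]
  congr with v
  ring_nf

lemma div_one_add_abs_sub_le_integral_of_mul_exp_neg_abs_le {f : ℝ → ℝ} (hf : Continuous f)
    {a : ℝ} (ha : 0 ≤ f a) (hdecay : ∀ y, f a * exp (-|y - a|) ≤ f y) (b : ℝ) :
    f a / (1 + |b - a|) ≤ ∫ v in (0 : ℝ)..1, f (a + v * (b - a)) :=
  calc f a / (1 + |b - a|) = f a * (1 + |b - a|)⁻¹ := div_eq_mul_inv _ _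
    _ ≤ f a * ∫ v in (0 : ℝ)..1, exp (-(|b - a| * v)) :=
        mul_le_mul_of_nonneg_left (inv_one_add_le_integral_exp_neg_mul (abs_nonneg _)) ha
    _ = ∫ v in (0 : ℝ)..1, f a * exp (-(|b - a| * v)) := (integral_const_mul _ _).symm
    _ ≤ ∫ v in (0 : ℝ)..1, f (a + v * (b - a)) := by
        refine integral_mono_on zero_le_one ((by fun_prop : Continuous _).intervalIntegrable _ _)
          ((by fun_prop : Continuous _).intervalIntegrable _ _) fun v hv => ?_
        have h := hdecay (a + v * (b - a))
        rwa [add_sub_cancel_left, abs_mul, abs_of_nonneg hv.1, mul_comm v] at h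

/-- Local lower bound on the averaged derivative of the logistic function. -/
theorem logistic_integral_deriv_lower_bound (a b : ℝ) :
    ((∫ v in (0:ℝ)..1, deriv (fun z : ℝ => 1 / (1 + Real.exp (-z))) (a + v * (b - a)))
        ≥ deriv (fun z : ℝ => 1 / (1 + Real.exp (-z))) a / (1 + |b - a|)) ∧
    ((∫ v in (0:ℝ)..1, deriv (fun z : ℝ => 1 / (1 + Real.exp (-z))) (a + v * (b - a)))
        ≥ deriv (fun z : ℝ => 1 / (1 + Real.exp (-z))) b / (1 + |b - a|)) := by
  have hσ : (fun z : ℝ => 1 / (1 + Real.exp (-z))) = sigmoid := funext fun z => one_div _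
  have key (a b : ℝ) := div_one_add_abs_sub_le_integral_of_mul_exp_neg_abs_le
    continuous_deriv_sigmoid (deriv_sigmoid_nonneg a) (deriv_sigmoid_mul_exp_neg_abs_le a) b
  rw [hσ]
  refine ⟨key a b, ?_⟩
  rw [integral_comp_add_mul_sub_symm, abs_sub_comm]
  exact key b a
end

section
/- (BAI characteristic time) Let 𝒳 ⊂ ℝ^d be finite, θ ∈ ℝ^d with unique best arm x* = argmax_{x∈𝒳} xᵀθ, and let H_w(θ) be positive definite for a fixed w in the interior of the simplex. Then inf over λ ∈ Alt(θ) of (1/2)‖θ−λ‖²_{H_w(θ)} equals min_{x ≠ x*} (θᵀx* − θᵀx)² / (2‖x* − x‖²_{H_w(θ)⁻¹}), where Alt(θ) = {λ : argmax_{x∈𝒳} xᵀλ ≠ x*}. -/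
/-!
The alternative set is the union, over the suboptimal arms `x`, of the open half-spaces
`{λ | (x* - x) ⬝ᵥ λ < 0}`, so the infimum is the least of the infima over these half-spaces.
For a half-space with normal `a` and `a ⬝ᵥ θ ≥ 0`, Cauchy–Schwarz in the form
`(a ⬝ᵥ v)² ≤ ‖a‖²_{H⁻¹} ‖v‖²_H` bounds `½‖θ - λ‖²_H` below by `(a ⬝ᵥ θ)² / (2‖a‖²_{H⁻¹})`,
and the points `λ = θ - s • H⁻¹ a` with `s ↓ a ⬝ᵥ θ / ‖a‖²_{H⁻¹}` approach this bound.
-/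

open Matrix Finset Filter Topology

theorem Finset.isGLB_biUnion_inf' {ι α : Type*} [SemilatticeInf α] {s : Finset ι}
    (hs : s.Nonempty) {f : ι → Set α} {g : ι → α} (h : ∀ i ∈ s, IsGLB (f i) (g i)) :
    IsGLB (⋃ i ∈ s, f i) (s.inf' hs g) := by
  refine ⟨?_, fun b hb => le_inf' hs g fun i hi => (h i hi).2 fun r hr => hb ?_⟩
  · intro r hr
    obtain ⟨i, hi, hr⟩ := Set.mem_iUnion₂.mp hr
    exact (inf'_le g hi).trans ((h i hi).1 hr)
  · exact Set.mem_iUnion₂.mpr ⟨i, hi, hr⟩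

theorem Matrix.mulVec_nonsing_inv_mulVec {n R : Type*} [Fintype n] [DecidableEq n] [CommRing R]
    (A : Matrix n n R) (h : IsUnit A.det) (v : n → R) : A *ᵥ (A⁻¹ *ᵥ v) = v := by
  rw [mulVec_mulVec, mul_nonsing_inv A h, one_mulVec]

section QuadraticForm

variable {n : Type*} [Fintype n] [DecidableEq n] {H : Matrix n n ℝ}

theorem Matrix.PosSemidef.sq_dotProduct_mulVec_le (hH : H.PosSemidef) (u v : n → ℝ) :
    (u ⬝ᵥ H *ᵥ v) ^ 2 ≤ (u ⬝ᵥ H *ᵥ u) * (v ⬝ᵥ H *ᵥ v) := by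
  have hsymm : Hᵀ = H := by simpa using hH.isHermitian.eq
  simpa only [toBilin'_apply'] using (toBilin' H).apply_sq_le_of_symm
    (fun x => by simpa only [toBilin'_apply', star_trivial] using hH.dotProduct_mulVec_nonneg x)
    (LinearMap.BilinForm.isSymm_iff.mp (isSymm_toBilin'_iff_isSymm.mpr hsymm)) u v

theorem Matrix.PosDef.sq_dotProduct_le (hH : H.PosDef) (a v : n → ℝ) :
    (a ⬝ᵥ v) ^ 2 ≤ (a ⬝ᵥ H⁻¹ *ᵥ a) * (v ⬝ᵥ H *ᵥ v) := by
  have hHu := mulVec_nonsing_inv_mulVec H hH.det_pos.ne'.isUnit a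
  have hsymm : Hᵀ = H := by simpa using hH.isHermitian.eq
  have hcross : H⁻¹ *ᵥ a ⬝ᵥ H *ᵥ v = a ⬝ᵥ v := by
    rw [dotProduct_mulVec, ← mulVec_transpose, hsymm, hHu]
  have hdiag : H⁻¹ *ᵥ a ⬝ᵥ H *ᵥ (H⁻¹ *ᵥ a) = a ⬝ᵥ H⁻¹ *ᵥ a := by
    rw [hHu, dotProduct_comm]
  simpa only [hcross, hdiag] using hH.posSemidef.sq_dotProduct_mulVec_le (H⁻¹ *ᵥ a) v

theorem Matrix.PosDef.isGLB_image_halfSpace (hH : H.PosDef) {a θ : n → ℝ} (ha : a ≠ 0)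
    (hθ : 0 ≤ a ⬝ᵥ θ) :
    IsGLB ((fun l => 1 / 2 * ((θ - l) ⬝ᵥ H *ᵥ (θ - l))) '' {l | a ⬝ᵥ l < 0})
      ((a ⬝ᵥ θ) ^ 2 / (2 * (a ⬝ᵥ H⁻¹ *ᵥ a))) := by
  set α := a ⬝ᵥ H⁻¹ *ᵥ a
  have hα : 0 < α := by simpa using hH.inv.dotProduct_mulVec_pos ha
  constructor
  · rintro _ ⟨l, hl, rfl⟩
    have hgap : a ⬝ᵥ θ < a ⬝ᵥ (θ - l) := by
      rw [dotProduct_sub]; linarith [show a ⬝ᵥ l < 0 from hl]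
    have hcs := hH.sq_dotProduct_le a (θ - l)
    rw [div_le_iff₀ (by positivity)]
    nlinarith
  · intro b hb
    have hHu := mulVec_nonsing_inv_mulVec H hH.det_pos.ne'.isUnit a
    have hbound : ∀ s > a ⬝ᵥ θ / α, b ≤ 1 / 2 * (s ^ 2 * α) := by
      intro s hs
      refine hb ⟨θ - s • (H⁻¹ *ᵥ a), ?_, ?_⟩
      · rw [Set.mem_ofPred_eq, dotProduct_sub, dotProduct_smul, smul_eq_mul, sub_neg]
        exact (div_lt_iff₀ hα).mp hs
      · simp only [sub_sub_cancel, mulVec_smul, hHu, dotProduct_smul,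
          smul_eq_mul, dotProduct_comm _ a]
        ring
    have hlim : Tendsto (fun s => 1 / 2 * (s ^ 2 * α)) (𝓝[>] (a ⬝ᵥ θ / α))
        (𝓝 ((a ⬝ᵥ θ) ^ 2 / (2 * α))) := by
      have hval : (a ⬝ᵥ θ) ^ 2 / (2 * α) = 1 / 2 * ((a ⬝ᵥ θ / α) ^ 2 * α) := by
        field_simp
      rw [hval]
      exact ((continuous_const.mul ((continuous_pow 2).mul continuous_const)).tendsto _).mono_left
        nhdsWithin_le_nhds
    exact ge_of_tendsto hlim (eventually_nhdsWithin_of_forall hbound)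

end QuadraticForm

theorem bai_characteristic_time_general
    (d : ℕ) (X : Finset (Fin d → ℝ)) (θ : Fin d → ℝ)
    (xstar : Fin d → ℝ)
    (hbest : ∀ x ∈ X, x ≠ xstar → x ⬝ᵥ θ < xstar ⬝ᵥ θ)
    (hne : (X.erase xstar).Nonempty)
    (H : Matrix (Fin d) (Fin d) ℝ)
    (hH : H.PosDef) :
    sInf {r : ℝ | ∃ l : Fin d → ℝ,
        (∃ x ∈ X, x ≠ xstar ∧ x ⬝ᵥ l > xstar ⬝ᵥ l) ∧
        r = (1 / 2) * ((θ - l) ⬝ᵥ H.mulVec (θ - l))}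
      = (X.erase xstar).inf' hne (fun x =>
          (θ ⬝ᵥ xstar - θ ⬝ᵥ x) ^ 2
            / (2 * ((xstar - x) ⬝ᵥ H⁻¹.mulVec (xstar - x)))) := by
  have hAlt : {r : ℝ | ∃ l : Fin d → ℝ,
        (∃ x ∈ X, x ≠ xstar ∧ x ⬝ᵥ l > xstar ⬝ᵥ l) ∧
        r = (1 / 2) * ((θ - l) ⬝ᵥ H.mulVec (θ - l))}
      = ⋃ x ∈ X.erase xstar, (fun l => 1 / 2 * ((θ - l) ⬝ᵥ H *ᵥ (θ - l))) ''
          {l | (xstar - x) ⬝ᵥ l < 0} := by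
    ext r
    simp only [Set.mem_ofPred_eq, Set.mem_iUnion, Set.mem_image, mem_erase, sub_dotProduct,
      sub_neg, gt_iff_lt]
    constructor
    · rintro ⟨l, ⟨x, hx, hxne, hl⟩, rfl⟩
      exact ⟨x, ⟨hxne, hx⟩, l, hl, rfl⟩
    · rintro ⟨x, ⟨hxne, hx⟩, l, hl, rfl⟩
      exact ⟨l, ⟨x, hx, hxne, hl⟩, rfl⟩
  have hgap : ∀ x, (xstar - x) ⬝ᵥ θ = θ ⬝ᵥ xstar - θ ⬝ᵥ x := fun x => by
    rw [sub_dotProduct, dotProduct_comm xstar, dotProduct_comm x]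
  have hglb := isGLB_biUnion_inf' hne fun x hx => by
    obtain ⟨hxne, hxX⟩ := mem_erase.mp hx
    refine hH.isGLB_image_halfSpace (θ := θ) (sub_ne_zero.mpr hxne.symm) ?_
    rw [sub_dotProduct]
    exact sub_nonneg.mpr (hbest x hxX hxne).le
  rw [hAlt, hglb.csInf_eq hglb.nonempty]
  exact inf'_congr hne rfl fun x _ => by rw [hgap x]

/-- BAI characteristic time: the infimum of `(1/2)‖θ−λ‖²_{H_w(θ)}` over the
alternative set equals the minimum over suboptimal arms of
`(θᵀx* − θᵀx)² / (2‖x* − x‖²_{H_w(θ)⁻¹})`. -/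
theorem bai_characteristic_time
    (d : ℕ) (X : Finset (Fin d → ℝ)) (θ : Fin d → ℝ)
    (xstar : Fin d → ℝ) (hxstar : xstar ∈ X)
    (hbest : ∀ x ∈ X, x ≠ xstar → x ⬝ᵥ θ < xstar ⬝ᵥ θ)
    (hne : (X.erase xstar).Nonempty)
    (w : (Fin d → ℝ) → ℝ) (hw : ∀ x ∈ X, 0 < w x) (hw1 : ∑ x ∈ X, w x = 1)
    (H : Matrix (Fin d) (Fin d) ℝ)
    (hHdef : H = ∑ x ∈ X,
      (w x * deriv (fun z : ℝ => 1 / (1 + Real.exp (-z))) (x ⬝ᵥ θ))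
        • vecMulVec x x)
    (hH : H.PosDef) :
    sInf {r : ℝ | ∃ l : Fin d → ℝ,
        (∃ x ∈ X, x ≠ xstar ∧ x ⬝ᵥ l > xstar ⬝ᵥ l) ∧
        r = (1 / 2) * ((θ - l) ⬝ᵥ H.mulVec (θ - l))}
      = (X.erase xstar).inf' hne (fun x =>
          (θ ⬝ᵥ xstar - θ ⬝ᵥ x) ^ 2
            / (2 * ((xstar - x) ⬝ᵥ H⁻¹.mulVec (xstar - x)))) :=
  bai_characteristic_time_general d X θ xstar hbest hne H hH
end

section
/- (Thresholding bandit characteristic time) Let 𝒳 ⊂ ℝ^d be finite, ρ ∈ (0,1), θ ∈ ℝ^d with μ(xᵀθ) ≠ ρ for all x ∈ 𝒳, and H a fixed positive definite matrix. Define Alt(θ) := {λ : ∃ x ∈ 𝒳 with sign(xᵀλ − μ⁻¹(ρ)) ≠ sign(xᵀθ − μ⁻¹(ρ))}. Then inf_{λ∈Alt(θ)} (1/2)‖θ−λ‖²_H = min_{x∈𝒳} (θᵀx − μ⁻¹(ρ))² / (2‖x‖²_{H⁻¹}). -/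
open Matrix Finset

/-! With `c = μ⁻¹(ρ)`, the alternative set is the union over `x ∈ X` of the half-spaces on the far
side of the hyperplane `xᵀλ = c` from `θ`. The lower bound is Cauchy–Schwarz for the `H`-inner
product, `(xᵀu)² ≤ ‖u‖²_H ‖x‖²_{H⁻¹}`, applied to `u = θ - λ`, together with `|xᵀθ - c| ≤ |xᵀu|`
on the far side. It is attained by the `H`-projection `λ = θ - t H⁻¹x` of `θ` onto the hyperplane,
which lies in the alternative set because `xᵀθ ≠ c`. -/

theorem Real.mul_nonpos_of_sign_ne {a b : ℝ} (h : Real.sign a ≠ Real.sign b) : a * b ≤ 0 := by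
  by_contra! hab
  rcases lt_trichotomy a 0 with ha | rfl | ha
  · exact h (by rw [sign_of_neg ha, sign_of_neg (neg_of_mul_pos_right hab ha.le)])
  · simp at hab
  · exact h (by rw [sign_of_pos ha, sign_of_pos (pos_of_mul_pos_right hab ha.le)])

theorem one_div_one_add_exp_neg_log_div_one_sub {ρ : ℝ} (hρ : ρ ∈ Set.Ioo (0:ℝ) 1) :
    1 / (1 + Real.exp (-Real.log (ρ / (1 - ρ)))) = ρ := by
  obtain ⟨hρ0, hρ1⟩ := hρ
  have : 0 < 1 - ρ := sub_pos.2 hρ1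
  rw [Real.exp_neg, Real.exp_log (by positivity), inv_div]
  field_simp
  ring

namespace Matrix

variable {n : Type*} [Fintype n]

theorem PosSemidef.dotProduct_mulVec_comm {H : Matrix n n ℝ} (hH : H.PosSemidef) (u v : n → ℝ) :
    u ⬝ᵥ H *ᵥ v = v ⬝ᵥ H *ᵥ u := by
  rw [dotProduct_mulVec, ← mulVec_transpose, show Hᵀ = H from hH.1, dotProduct_comm]

theorem PosSemidef.sq_dotProduct_mulVec_le_s15 {H : Matrix n n ℝ} (hH : H.PosSemidef) (u v : n → ℝ) :
    (v ⬝ᵥ H *ᵥ u) ^ 2 ≤ (v ⬝ᵥ H *ᵥ v) * (u ⬝ᵥ H *ᵥ u) := by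
  have hquad : ∀ t : ℝ,
      0 ≤ (v ⬝ᵥ H *ᵥ v) * (t * t) + 2 * (v ⬝ᵥ H *ᵥ u) * t + u ⬝ᵥ H *ᵥ u := by
    intro t
    have := hH.dotProduct_mulVec_nonneg (u + t • v)
    simp only [star_trivial, mulVec_add, mulVec_smul, add_dotProduct, dotProduct_add,
      smul_dotProduct, dotProduct_smul, smul_eq_mul, hH.dotProduct_mulVec_comm u v] at this
    linarith
  have := discrim_le_zero hquad
  rw [discrim] at this
  nlinarith

variable [DecidableEq n] {H : Matrix n n ℝ}

theorem PosDef.mulVec_inv_mulVec (hH : H.PosDef) (x : n → ℝ) : H *ᵥ (H⁻¹ *ᵥ x) = x := by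
  rw [mulVec_mulVec, mul_nonsing_inv _ hH.det_pos.ne'.isUnit, one_mulVec]

theorem PosDef.inv_mulVec_dotProduct_mulVec (hH : H.PosDef) (x u : n → ℝ) :
    H⁻¹ *ᵥ x ⬝ᵥ H *ᵥ u = x ⬝ᵥ u := by
  rw [hH.posSemidef.dotProduct_mulVec_comm, hH.mulVec_inv_mulVec, dotProduct_comm]

theorem PosDef.dotProduct_inv_mulVec_pos (hH : H.PosDef) {x : n → ℝ} (hx : x ≠ 0) :
    0 < x ⬝ᵥ H⁻¹ *ᵥ x := by
  simpa using hH.inv.dotProduct_mulVec_pos hx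

theorem PosDef.sq_dotProduct_le_s15 (hH : H.PosDef) (x u : n → ℝ) :
    (x ⬝ᵥ u) ^ 2 ≤ (u ⬝ᵥ H *ᵥ u) * (x ⬝ᵥ H⁻¹ *ᵥ x) := by
  have := hH.posSemidef.sq_dotProduct_mulVec_le_s15 u (H⁻¹ *ᵥ x)
  rwa [hH.inv_mulVec_dotProduct_mulVec, hH.inv_mulVec_dotProduct_mulVec, mul_comm] at this

theorem PosDef.sq_div_le_of_mul_nonpos (hH : H.PosDef) {x : n → ℝ} (hx : x ≠ 0)
    {θ l : n → ℝ} {c : ℝ} (h : (x ⬝ᵥ l - c) * (x ⬝ᵥ θ - c) ≤ 0) :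
    (x ⬝ᵥ θ - c) ^ 2 / (2 * (x ⬝ᵥ H⁻¹ *ᵥ x)) ≤ 1 / 2 * ((θ - l) ⬝ᵥ H *ᵥ (θ - l)) := by
  have hq := hH.dotProduct_inv_mulVec_pos hx
  rw [div_le_iff₀ (by positivity)]
  calc (x ⬝ᵥ θ - c) ^ 2 ≤ (x ⬝ᵥ (θ - l)) ^ 2 := by rw [dotProduct_sub]; nlinarith
    _ ≤ ((θ - l) ⬝ᵥ H *ᵥ (θ - l)) * (x ⬝ᵥ H⁻¹ *ᵥ x) := hH.sq_dotProduct_le_s15 x (θ - l)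
    _ = _ := by ring

theorem PosDef.exists_dotProduct_eq_and_eq_sq_div (hH : H.PosDef) {x : n → ℝ} (hx : x ≠ 0)
    (θ : n → ℝ) (c : ℝ) : ∃ l, x ⬝ᵥ l = c ∧
      1 / 2 * ((θ - l) ⬝ᵥ H *ᵥ (θ - l)) = (x ⬝ᵥ θ - c) ^ 2 / (2 * (x ⬝ᵥ H⁻¹ *ᵥ x)) := by
  have hq := hH.dotProduct_inv_mulVec_pos hx
  set t := (x ⬝ᵥ θ - c) / (x ⬝ᵥ H⁻¹ *ᵥ x)
  have ht : t * (x ⬝ᵥ H⁻¹ *ᵥ x) = x ⬝ᵥ θ - c := div_mul_cancel₀ _ hq.ne'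
  refine ⟨θ - t • H⁻¹ *ᵥ x, ?_, ?_⟩
  · rw [dotProduct_sub, dotProduct_smul, smul_eq_mul, ht, sub_sub_cancel]
  · rw [sub_sub_cancel, mulVec_smul, smul_dotProduct, dotProduct_smul,
      hH.inv_mulVec_dotProduct_mulVec, smul_eq_mul, smul_eq_mul, ← ht]
    field_simp

end Matrix

/-- Thresholding bandit characteristic time. -/
theorem tbp_characteristic_time
    (d : ℕ) (X : Finset (Fin d → ℝ)) (hX : X.Nonempty)
    (hx0 : ∀ x ∈ X, x ≠ 0)
    (ρ : ℝ) (hρ : ρ ∈ Set.Ioo (0:ℝ) 1) (θ : Fin d → ℝ)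
    (hθ : ∀ x ∈ X, 1 / (1 + Real.exp (-(x ⬝ᵥ θ))) ≠ ρ)
    (H : Matrix (Fin d) (Fin d) ℝ) (hH : H.PosDef) :
    sInf {r : ℝ | ∃ l : Fin d → ℝ,
        (∃ x ∈ X, Real.sign (x ⬝ᵥ l - Real.log (ρ / (1 - ρ)))
            ≠ Real.sign (x ⬝ᵥ θ - Real.log (ρ / (1 - ρ)))) ∧
        r = (1 / 2) * ((θ - l) ⬝ᵥ H.mulVec (θ - l))}
      = X.inf' hX (fun x =>
          (θ ⬝ᵥ x - Real.log (ρ / (1 - ρ))) ^ 2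
            / (2 * (x ⬝ᵥ H⁻¹.mulVec x))) := by
  set c := Real.log (ρ / (1 - ρ))
  have hne : ∀ x ∈ X, x ⬝ᵥ θ - c ≠ 0 := fun x hx h =>
    hθ x hx (by rw [sub_eq_zero.1 h]; exact one_div_one_add_exp_neg_log_div_one_sub hρ)
  simp only [dotProduct_comm θ]
  refine IsLeast.csInf_eq ⟨?_, ?_⟩
  · obtain ⟨x₀, hx₀, hmin⟩ := exists_mem_eq_inf' hX
      fun x => (x ⬝ᵥ θ - c) ^ 2 / (2 * (x ⬝ᵥ H⁻¹ *ᵥ x))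
    obtain ⟨l, hl, hval⟩ := hH.exists_dotProduct_eq_and_eq_sq_div (hx0 x₀ hx₀) θ c
    refine ⟨l, ⟨x₀, hx₀, ?_⟩, by rw [hmin, hval]⟩
    rw [hl, sub_self, Real.sign_zero]
    exact fun h => hne x₀ hx₀ (Real.sign_eq_zero_iff.1 h.symm)
  · rintro r ⟨l, ⟨x, hx, hsign⟩, rfl⟩
    exact (inf'_le _ hx).trans
      (hH.sq_div_le_of_mul_nonpos (hx0 x hx) (Real.mul_nonpos_of_sign_ne hsign))
end
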